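/- arXiv:1806.05225 — 5 statements merged into one kernel-verified Lean document; each statement's English description precedes it below -/
import Mathlib

section
/- Let X and Y be compact metric spaces, and let (𝒞_n)_{n≥0} and (𝒟_n)_{n≥0} be sequences of chains in X and Y respectively such that 𝒞_{n+1} properly refines 𝒞_n, 𝒟_{n+1} properly refines 𝒟_n, and Pat(𝒞_{n+1}, 𝒞_n) = Pat(𝒟_{n+1}, 𝒟_n) for every n ≥ 0. Assume also that mesh(𝒞_n) → 0 and mesh(𝒟_n) → 0 as n → ∞. Then X′ = ∩_{n≥0} 𝒞_n* and Y′ = ∩_{n≥0} 𝒟_n* are nonempty and homeomorphic. -/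
open Metric Filter Topology

/-- A chain in a metric space: a finite sequence of open sets (links) such that two links
intersect if and only if their indices differ by at most 1. -/
def IsChainIn {X : Type*} [MetricSpace X] {n : ℕ} (ℓ : Fin n → Set X) : Prop :=
  (∀ i, IsOpen (ℓ i)) ∧
    ∀ i j : Fin n, ((ℓ i) ∩ (ℓ j)).Nonempty ↔ |((i : ℕ) : ℤ) - ((j : ℕ) : ℤ)| ≤ 1

/-- The mesh of a chain: the maximal diameter of its links. -/
noncomputable def chainMesh {X : Type*} [MetricSpace X] {n : ℕ} (ℓ : Fin n → Set X) : ℝ :=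
  ⨆ i, Metric.diam (ℓ i)

private lemma diam_le_chainMesh {X : Type*} [MetricSpace X] {m : ℕ} (ℓ : Fin (m + 1) → Set X)
    (i : Fin (m + 1)) : Metric.diam (ℓ i) ≤ chainMesh ℓ :=
  le_ciSup (Set.finite_range fun i => Metric.diam (ℓ i)).bddAbove i

private lemma link_nonempty {X : Type*} [MetricSpace X] {m : ℕ} {ℓ : Fin m → Set X}
    (h : IsChainIn ℓ) (i : Fin m) : (ℓ i).Nonempty := by
  have := (h.2 i i).2 (by simp)
  exact this.mono Set.inter_subset_left

/-- Two points in closures of links whose indices differ by at most 2 are within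
`3 * chainMesh` of each other. -/
private lemma chain_close {X : Type*} [MetricSpace X] [CompactSpace X] {m : ℕ}
    {ℓ : Fin (m + 1) → Set X} (h : IsChainIn ℓ) {a b : Fin (m + 1)}
    (hab : |((a : ℕ) : ℤ) - ((b : ℕ) : ℤ)| ≤ 2) {p q : X}
    (hp : p ∈ closure (ℓ a)) (hq : q ∈ closure (ℓ b)) :
    dist p q ≤ 3 * chainMesh ℓ := by
  rw [abs_sub_le_iff] at hab
  wlog hle : (a : ℕ) ≤ (b : ℕ) generalizing a b p q with H
  · rw [dist_comm]
    exact H (And.intro hab.2 hab.1) hq hp (by omega)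
  set c : Fin (m + 1) := ⟨min ((a : ℕ) + 1) (b : ℕ), lt_of_le_of_lt (min_le_right _ _) b.isLt⟩
    with hc
  have hcval : (c : ℕ) = min ((a : ℕ) + 1) (b : ℕ) := rfl
  obtain ⟨u, hu⟩ : (ℓ a ∩ ℓ c).Nonempty := by
    refine (h.2 a c).2 ?_
    rw [abs_sub_le_iff, hcval]
    constructor <;> [skip; skip] <;> push_cast <;> omega
  obtain ⟨v, hv⟩ : (ℓ c ∩ ℓ b).Nonempty := by
    refine (h.2 c b).2 ?_
    rw [abs_sub_le_iff, hcval]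
    constructor <;> [skip; skip] <;> push_cast <;> omega
  have h1 : dist p u ≤ chainMesh ℓ := by
    calc dist p u ≤ Metric.diam (closure (ℓ a)) :=
          Metric.dist_le_diam_of_mem isBounded_of_compactSpace hp (subset_closure hu.1)
      _ = Metric.diam (ℓ a) := Metric.diam_closure _
      _ ≤ chainMesh ℓ := diam_le_chainMesh ℓ a
  have h2 : dist u v ≤ chainMesh ℓ :=
    le_trans (Metric.dist_le_diam_of_mem isBounded_of_compactSpace hu.2 hv.1)
      (diam_le_chainMesh ℓ c)
  have h3 : dist v q ≤ chainMesh ℓ := by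
    calc dist v q ≤ Metric.diam (closure (ℓ b)) :=
          Metric.dist_le_diam_of_mem isBounded_of_compactSpace (subset_closure hv.2) hq
      _ = Metric.diam (ℓ b) := Metric.diam_closure _
      _ ≤ chainMesh ℓ := diam_le_chainMesh ℓ b
  have := dist_triangle4 p u v q
  linarith

private lemma inter_nonempty {X : Type*} [MetricSpace X] [CompactSpace X] (k : ℕ → ℕ)
    (𝒞 : ∀ n, Fin (k n + 1) → Set X) (h𝒞 : ∀ n, IsChainIn (𝒞 n))
    (pat : ∀ n, Fin (k (n + 1) + 1) → Fin (k n + 1))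
    (h𝒞ref : ∀ n j, closure (𝒞 (n + 1) j) ⊆ 𝒞 n (pat n j)) :
    (⋂ n, ⋃ i, 𝒞 n i).Nonempty := by
  set L : ℕ → Set X := fun n => ⋃ i, closure (𝒞 (n + 1) i) with hL
  have hclosed : ∀ n, IsClosed (L n) := fun n =>
    isClosed_iUnion_of_finite fun i => isClosed_closure
  have hne : ∀ n, (L n).Nonempty := fun n => by
    obtain ⟨x, hx⟩ := link_nonempty (h𝒞 (n + 1)) 0
    exact ⟨x, Set.mem_iUnion.2 ⟨0, subset_closure hx⟩⟩
  have hmono : ∀ n, L (n + 1) ⊆ L n := by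
    intro n x hx
    obtain ⟨j, hj⟩ := Set.mem_iUnion.1 hx
    exact Set.mem_iUnion.2 ⟨pat (n + 1) j, subset_closure (h𝒞ref (n + 1) j hj)⟩
  obtain ⟨x, hx⟩ := IsCompact.nonempty_iInter_of_sequence_nonempty_isCompact_isClosed L hmono hne
    (hclosed 0).isCompact hclosed
  refine ⟨x, Set.mem_iInter.2 fun n => ?_⟩
  have : x ∈ L n := Set.mem_iInter.1 hx n
  obtain ⟨j, hj⟩ := Set.mem_iUnion.1 this
  exact Set.mem_iUnion.2 ⟨pat n j, h𝒞ref n j hj⟩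

/-- Existence of the basic map from `X'` to `Y'`. -/
private lemma exists_map {X Y : Type*} [MetricSpace X] [MetricSpace Y] [CompactSpace Y]
    (k : ℕ → ℕ) (𝒞 : ∀ n, Fin (k n + 1) → Set X) (𝒟 : ∀ n, Fin (k n + 1) → Set Y)
    (h𝒟 : ∀ n, IsChainIn (𝒟 n))
    (pat : ∀ n, Fin (k (n + 1) + 1) → Fin (k n + 1))
    (h𝒞ref : ∀ n j, closure (𝒞 (n + 1) j) ⊆ 𝒞 n (pat n j))
    (h𝒟ref : ∀ n j, closure (𝒟 (n + 1) j) ⊆ 𝒟 n (pat n j)) :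
    ∃ f : X → Y, ∀ x ∈ ⋂ n, ⋃ i, 𝒞 n i,
      f x ∈ (⋂ n, ⋃ i, 𝒟 n i) ∧ ∀ n, ∃ a, x ∈ 𝒞 n a ∧ f x ∈ closure (𝒟 n a) := by
  classical
  have hYne : Nonempty Y := ⟨(link_nonempty (h𝒟 0) 0).choose⟩
  have key : ∀ x, x ∈ (⋂ n, ⋃ i, 𝒞 n i) → ∃ y : Y,
      y ∈ (⋂ n, ⋃ i, 𝒟 n i) ∧ ∀ n, ∃ a, x ∈ 𝒞 n a ∧ y ∈ closure (𝒟 n a) := by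
    intro x hx
    set K : ℕ → Set Y := fun n => ⋃ i ∈ {i | x ∈ 𝒞 n i}, closure (𝒟 n i) with hK
    have hclosed : ∀ n, IsClosed (K n) := fun n =>
      (Set.toFinite _).isClosed_biUnion fun i _ => isClosed_closure
    have hne : ∀ n, (K n).Nonempty := by
      intro n
      obtain ⟨i, hi⟩ := Set.mem_iUnion.1 (Set.mem_iInter.1 hx n)
      obtain ⟨y, hy⟩ := link_nonempty (h𝒟 n) i
      exact ⟨y, Set.mem_biUnion hi (subset_closure hy)⟩
    have hmono : ∀ n, K (n + 1) ⊆ K n := by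
      intro n y hy
      obtain ⟨j, hj, hyj⟩ := Set.mem_iUnion₂.1 hy
      exact Set.mem_biUnion (h𝒞ref n j (subset_closure hj))
        (subset_closure (h𝒟ref n j hyj))
    obtain ⟨y, hy⟩ := IsCompact.nonempty_iInter_of_sequence_nonempty_isCompact_isClosed K hmono
      hne (hclosed 0).isCompact hclosed
    refine ⟨y, Set.mem_iInter.2 fun n => ?_, fun n => ?_⟩
    · obtain ⟨j, hj, hyj⟩ := Set.mem_iUnion₂.1 (Set.mem_iInter.1 hy (n + 1))
      exact Set.mem_iUnion.2 ⟨pat n j, h𝒟ref n j hyj⟩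
    · obtain ⟨a, ha, hya⟩ := Set.mem_iUnion₂.1 (Set.mem_iInter.1 hy n)
      exact ⟨a, ha, hya⟩
  choose! f hf using key
  exact ⟨f, hf⟩

/-- Continuity of any map with the itinerary property. -/
private lemma cont_aux {X Y : Type*} [MetricSpace X] [MetricSpace Y] [CompactSpace Y]
    (k : ℕ → ℕ) (𝒞 : ∀ n, Fin (k n + 1) → Set X) (𝒟 : ∀ n, Fin (k n + 1) → Set Y)
    (h𝒞 : ∀ n, IsChainIn (𝒞 n)) (h𝒟 : ∀ n, IsChainIn (𝒟 n))
    (h𝒟mesh : Tendsto (fun n => chainMesh (𝒟 n)) atTop (nhds 0))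
    (f : X → Y)
    (hf : ∀ x ∈ ⋂ n, ⋃ i, 𝒞 n i, ∀ n, ∃ a, x ∈ 𝒞 n a ∧ f x ∈ closure (𝒟 n a)) :
    ContinuousOn f (⋂ n, ⋃ i, 𝒞 n i) := by
  rw [Metric.continuousOn_iff]
  intro b hb ε hε
  obtain ⟨n, hn⟩ : ∃ n, chainMesh (𝒟 n) < ε / 3 :=
    (h𝒟mesh.eventually (gt_mem_nhds (by positivity))).exists
  obtain ⟨j, hbj⟩ := Set.mem_iUnion.1 (Set.mem_iInter.1 hb n)
  obtain ⟨δ, hδ, hball⟩ := Metric.isOpen_iff.1 ((h𝒞 n).1 j) b hbj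
  refine ⟨δ, hδ, fun a ha hab => ?_⟩
  have haj : a ∈ 𝒞 n j := hball (by rwa [Metric.mem_ball])
  obtain ⟨c, hac, hfc⟩ := hf a ha n
  obtain ⟨d, hbd, hfd⟩ := hf b hb n
  have h1 : |((c : ℕ) : ℤ) - ((j : ℕ) : ℤ)| ≤ 1 := ((h𝒞 n).2 c j).1 ⟨a, hac, haj⟩
  have h2 : |((d : ℕ) : ℤ) - ((j : ℕ) : ℤ)| ≤ 1 := ((h𝒞 n).2 d j).1 ⟨b, hbd, hbj⟩
  have h3 : |((c : ℕ) : ℤ) - ((d : ℕ) : ℤ)| ≤ 2 := by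
    rw [abs_sub_le_iff] at h1 h2 ⊢; omega
  have := chain_close (h𝒟 n) h3 hfc hfd
  linarith


private lemma inv_key {X' Y' : Type*} [MetricSpace X'] [MetricSpace Y'] [CompactSpace X']
    (k : ℕ → ℕ) (𝒞' : ∀ n, Fin (k n + 1) → Set X') (𝒟' : ∀ n, Fin (k n + 1) → Set Y')
    (h𝒞' : ∀ n, IsChainIn (𝒞' n)) (h𝒟' : ∀ n, IsChainIn (𝒟' n))
    (hmesh : Tendsto (fun n => 3 * chainMesh (𝒞' n)) atTop (nhds 0))
    (f' : X' → Y') (g' : Y' → X')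
    (hf' : ∀ x ∈ ⋂ n, ⋃ i, 𝒞' n i,
      f' x ∈ (⋂ n, ⋃ i, 𝒟' n i) ∧ ∀ n, ∃ a, x ∈ 𝒞' n a ∧ f' x ∈ closure (𝒟' n a))
    (hg' : ∀ y ∈ ⋂ n, ⋃ i, 𝒟' n i,
      g' y ∈ (⋂ n, ⋃ i, 𝒞' n i) ∧ ∀ n, ∃ a, y ∈ 𝒟' n a ∧ g' y ∈ closure (𝒞' n a)) :
    ∀ x ∈ ⋂ n, ⋃ i, 𝒞' n i, g' (f' x) = x := by
  intro x hx
  have hy := hf' x hx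
  have hgy := hg' (f' x) hy.1
  have hbound : ∀ n, dist (g' (f' x)) x ≤ 3 * chainMesh (𝒞' n) := by
    intro n
    obtain ⟨a, hxa, hya⟩ := hy.2 n
    obtain ⟨b, hyb, hgb⟩ := hgy.2 n
    have hint : (𝒟' n b ∩ 𝒟' n a).Nonempty :=
      _root_.mem_closure_iff.1 hya (𝒟' n b) ((h𝒟' n).1 b) hyb
    have h1 : |((b : ℕ) : ℤ) - ((a : ℕ) : ℤ)| ≤ 1 := ((h𝒟' n).2 b a).1 hint
    have h2 : |((b : ℕ) : ℤ) - ((a : ℕ) : ℤ)| ≤ 2 := le_trans h1 one_le_two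
    exact chain_close (h𝒞' n) h2 hgb (subset_closure hxa)
  have hle : dist (g' (f' x)) x ≤ 0 := ge_of_tendsto hmesh (Eventually.of_forall hbound)
  have := le_antisymm hle dist_nonneg
  rwa [dist_eq_zero] at this

set_option maxHeartbeats 1000000 in
/-- Let `X` and `Y` be compact metric spaces and let `(𝒞 n)` and `(𝒟 n)` be
sequences of chains in `X` and `Y` respectively, such that `𝒞 (n+1)` properly refines `𝒞 n`,
`𝒟 (n+1)` properly refines `𝒟 n` and `Pat(𝒞 (n+1), 𝒞 n) = Pat(𝒟 (n+1), 𝒟 n)` for every `n`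
(the common pattern being the function `pat n`).  If the meshes of both sequences tend to `0`,
then `X' = ⋂ n (𝒞 n)*` and `Y' = ⋂ n (𝒟 n)*` are nonempty and homeomorphic. -/
theorem nested_chains_common_pattern_nonempty_homeomorphic
    {X Y : Type*} [MetricSpace X] [CompactSpace X] [MetricSpace Y] [CompactSpace Y]
    (k : ℕ → ℕ)
    (𝒞 : ∀ n, Fin (k n + 1) → Set X) (𝒟 : ∀ n, Fin (k n + 1) → Set Y)
    (h𝒞 : ∀ n, IsChainIn (𝒞 n)) (h𝒟 : ∀ n, IsChainIn (𝒟 n))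
    (pat : ∀ n, Fin (k (n + 1) + 1) → Fin (k n + 1))
    (h𝒞ref : ∀ n j, closure (𝒞 (n + 1) j) ⊆ 𝒞 n (pat n j))
    (h𝒟ref : ∀ n j, closure (𝒟 (n + 1) j) ⊆ 𝒟 n (pat n j))
    (h𝒞mesh : Tendsto (fun n => chainMesh (𝒞 n)) atTop (nhds 0))
    (h𝒟mesh : Tendsto (fun n => chainMesh (𝒟 n)) atTop (nhds 0)) :
    (⋂ n, ⋃ i, 𝒞 n i).Nonempty ∧ (⋂ n, ⋃ i, 𝒟 n i).Nonempty ∧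
      Nonempty ((⋂ n, ⋃ i, 𝒞 n i) ≃ₜ (⋂ n, ⋃ i, 𝒟 n i)) := by
  obtain ⟨f, hf⟩ := exists_map k 𝒞 𝒟 h𝒟 pat h𝒞ref h𝒟ref
  obtain ⟨g, hg⟩ := exists_map k 𝒟 𝒞 h𝒞 pat h𝒟ref h𝒞ref
  have hXne := inter_nonempty k 𝒞 h𝒞 pat h𝒞ref
  have hYne := inter_nonempty k 𝒟 h𝒟 pat h𝒟ref
  have h𝒞mesh3 : Tendsto (fun n => 3 * chainMesh (𝒞 n)) atTop (nhds 0) := by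
    simpa using h𝒞mesh.const_mul 3
  have h𝒟mesh3 : Tendsto (fun n => 3 * chainMesh (𝒟 n)) atTop (nhds 0) := by
    simpa using h𝒟mesh.const_mul 3
  have hgf : ∀ x ∈ ⋂ n, ⋃ i, 𝒞 n i, g (f x) = x :=
    inv_key k 𝒞 𝒟 h𝒞 h𝒟 h𝒞mesh3 f g hf hg
  have hfg : ∀ y ∈ ⋂ n, ⋃ i, 𝒟 n i, f (g y) = y :=
    inv_key k 𝒟 𝒞 h𝒟 h𝒞 h𝒟mesh3 g f hg hf
  have hfc : ContinuousOn f (⋂ n, ⋃ i, 𝒞 n i) :=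
    cont_aux k 𝒞 𝒟 h𝒞 h𝒟 h𝒟mesh f fun x hx => (hf x hx).2
  have hgc : ContinuousOn g (⋂ n, ⋃ i, 𝒟 n i) :=
    cont_aux k 𝒟 𝒞 h𝒟 h𝒞 h𝒞mesh g fun y hy => (hg y hy).2
  refine ⟨hXne, hYne, ⟨?_⟩⟩
  exact {
    toFun := fun x => ⟨f x.1, (hf x.1 x.2).1⟩
    invFun := fun y => ⟨g y.1, (hg y.1 y.2).1⟩
    left_inv := fun x => Subtype.ext (hgf x.1 x.2)
    right_inv := fun y => Subtype.ext (hfg y.1 y.2)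
    continuous_toFun :=
      (continuousOn_iff_continuous_restrict.1 hfc).subtype_mk _
    continuous_invFun :=
      (continuousOn_iff_continuous_restrict.1 hgc).subtype_mk _ }
end

section
/- Let f : [0,1] → [0,1] be a continuous surjection with surjective intervals A_1, …, A_n (n ≥ 1), and let J ⊂ [0,1] be a closed interval. Then for every i ∈ {1,…,n} there exists a closed interval J^i ⊂ A_i such that f(J^i) = J, f maps the set of endpoints of J^i onto the set of endpoints of J, and J^i ∩ R(A_i) ≠ ∅. -/
open Set Filter Topology

/-- A surjective interval of a map `f : [0,1] → [0,1]`: a closed interval `A ⊆ [0,1]` with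
`f(A) = [0,1]` such that no proper closed subinterval of `A` maps onto `[0,1]`. -/
def SurjInterval (f : ℝ → ℝ) (A : Set ℝ) : Prop :=
  ∃ a b : ℝ, a ≤ b ∧ A = Set.Icc a b ∧ A ⊆ Set.Icc 0 1 ∧
    f '' A = Set.Icc 0 1 ∧
    ∀ c d : ℝ, Set.Icc c d ⊂ A → f '' Set.Icc c d ≠ Set.Icc (0 : ℝ) 1

/-- The right accessible set of a surjective interval `A`:
`R(A) = {x ∈ A : f y ≠ f x for all y ∈ A with y > x}`. -/
def rightAccessible (f : ℝ → ℝ) (A : Set ℝ) : Set ℝ :=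
  {x ∈ A | ∀ y ∈ A, x < y → f y ≠ f x}

/-- Auxiliary lemma: given `c ∈ [α,β]` with `f c = q` which is the last point of `[α,β]`
taking the value `q`, and a point `ca ≥ c` with `f ca = p`, there is `d ≥ c` with `f d = p`
and `f '' [c,d] = uIcc p q`. -/
lemma aux_interval (f : ℝ → ℝ) (α β : ℝ)
    (hcont : ContinuousOn f (Set.Icc α β))
    (c ca : ℝ) (hc : c ∈ Set.Icc α β) (hca : ca ∈ Set.Icc α β)
    (hle : c ≤ ca) (p q : ℝ) (hfc : f c = q) (hfca : f ca = p)
    (hmax : ∀ y ∈ Set.Icc α β, c < y → f y ≠ q) :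
    ∃ d, c ≤ d ∧ d ∈ Set.Icc α β ∧ f d = p ∧
      f '' Set.Icc c d = Set.uIcc p q := by
  have hIccsub : Set.Icc c ca ⊆ Set.Icc α β := Set.Icc_subset_Icc hc.1 hca.2
  set S : Set ℝ := Set.Icc c ca ∩ f ⁻¹' {p} with hS
  have hSne : S.Nonempty := ⟨ca, ⟨hle, le_refl _⟩, hfca⟩
  have hSclosed : IsClosed S := by
    apply ContinuousOn.preimage_isClosed_of_isClosed (hcont.mono hIccsub)
      isClosed_Icc isClosed_singleton
  have hSbdd : BddBelow S := ⟨c, fun x hx => hx.1.1⟩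
  set d := sInf S with hd
  have hdS : d ∈ S := hSclosed.csInf_mem hSne hSbdd
  have hdmin : ∀ x ∈ S, d ≤ x := fun x hx => csInf_le hSbdd hx
  have hcd : c ≤ d := hdS.1.1
  have hdca : d ≤ ca := hdS.1.2
  have hdmem : d ∈ Set.Icc α β := ⟨le_trans hc.1 hcd, le_trans hdca hca.2⟩
  have hfd : f d = p := hdS.2
  refine ⟨d, hcd, hdmem, hfd, ?_⟩
  have hsubA : Set.Icc c d ⊆ Set.Icc α β := Set.Icc_subset_Icc hc.1 hdmem.2
  apply Set.Subset.antisymm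
  · rintro _ ⟨x, hx, rfl⟩
    by_contra hmem
    have hcases : f x < min p q ∨ max p q < f x := by
      by_contra h
      push_neg at h
      apply hmem
      rw [Set.mem_uIcc]
      rcases le_total p q with h' | h'
      · exact Or.inl ⟨le_trans (le_min le_rfl h') h.1, le_trans h.2 (max_le h' le_rfl)⟩
      · exact Or.inr ⟨le_trans (le_min h' le_rfl) h.1, le_trans h.2 (max_le le_rfl h')⟩
    have hxd : x ≤ d := hx.2
    have hcx : c ≤ x := hx.1
    have hxmem : x ∈ Set.Icc α β := hsubA hx
    -- either f x < min p q or max p q < f x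
    rcases hcases with hlt | hgt
    · -- f x < min p q
      rcases le_total q p with hqp | hpq
      · -- q ≤ p : find a q-point in [x,d], beyond c : contradiction with hmax
        have hfxq : f x < q := lt_of_lt_of_le hlt (min_le_right _ _)
        have : q ∈ Set.Icc (f x) (f d) := ⟨le_of_lt hfxq, hfd ▸ hqp⟩
        obtain ⟨y, hy, hfy⟩ := intermediate_value_Icc hxd
          (hcont.mono (Set.Icc_subset_Icc hxmem.1 hdmem.2)) this
        have hcy : c < y := lt_of_lt_of_le
          (lt_of_le_of_ne hcx (fun h => by rw [← h, hfc] at hfxq; exact lt_irrefl _ hfxq)) hy.1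
        exact hmax y ⟨le_trans hxmem.1 hy.1, le_trans hy.2 hdmem.2⟩ hcy hfy
      · -- p ≤ q : find a p-point in [c,x], contradicting minimality of d
        have hfxp : f x < p := lt_of_lt_of_le hlt (min_le_left _ _)
        have : p ∈ Set.Icc (f x) (f c) := ⟨le_of_lt hfxp, hfc ▸ hpq⟩
        obtain ⟨y, hy, hfy⟩ := intermediate_value_Icc' hcx
          (hcont.mono (Set.Icc_subset_Icc hc.1 hxmem.2)) this
        have hyS : y ∈ S := ⟨⟨hy.1, le_trans hy.2 (le_trans hxd hdca)⟩, hfy⟩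
        have : x = d := le_antisymm hxd (le_trans (hdmin y hyS) hy.2)
        rw [this, hfd] at hfxp; exact lt_irrefl _ hfxp
    · rcases le_total p q with hpq | hqp
      · -- p ≤ q : find a q-point in [x,d], beyond c
        have hfxq : q < f x := lt_of_le_of_lt (le_max_right _ _) hgt
        have : q ∈ Set.Icc (f d) (f x) := ⟨hfd ▸ hpq, le_of_lt hfxq⟩
        obtain ⟨y, hy, hfy⟩ := intermediate_value_Icc' hxd
          (hcont.mono (Set.Icc_subset_Icc hxmem.1 hdmem.2)) this
        have hcy : c < y := lt_of_lt_of_le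
          (lt_of_le_of_ne hcx (fun h => by rw [← h, hfc] at hfxq; exact lt_irrefl _ hfxq)) hy.1
        exact hmax y ⟨le_trans hxmem.1 hy.1, le_trans hy.2 hdmem.2⟩ hcy hfy
      · -- q ≤ p : find a p-point in [c,x], contradicting minimality of d
        have hfxp : p < f x := lt_of_le_of_lt (le_max_left _ _) hgt
        have : p ∈ Set.Icc (f c) (f x) := ⟨hfc ▸ hqp, le_of_lt hfxp⟩
        obtain ⟨y, hy, hfy⟩ := intermediate_value_Icc hcx
          (hcont.mono (Set.Icc_subset_Icc hc.1 hxmem.2)) this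
        have hyS : y ∈ S := ⟨⟨hy.1, le_trans hy.2 (le_trans hxd hdca)⟩, hfy⟩
        have : x = d := le_antisymm hxd (le_trans (hdmin y hyS) hy.2)
        rw [this, hfd] at hfxp; exact lt_irrefl _ hfxp
  · have : Set.uIcc p q = Set.uIcc (f c) (f d) := by
      rw [hfc, hfd, Set.uIcc_comm]
    rw [this]
    have := intermediate_value_uIcc (f := f) (a := c) (b := d)
      (by rw [Set.uIcc_of_le hcd]; exact hcont.mono hsubA)
    rwa [Set.uIcc_of_le hcd] at this

/-- Let `f : [0,1] → [0,1]` be a continuous surjection, let `A` be one of its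
surjective intervals, and let `J = [a,b] ⊆ [0,1]` be a closed interval.  Then there is a closed
interval `J^i = [c,d] ⊆ A` such that `f(J^i) = J`, `f` maps the endpoints of `J^i` onto the
endpoints of `J`, and `J^i` meets the right accessible set `R(A)`. -/
theorem exists_preimage_interval_meeting_rightAccessible
    (f : ℝ → ℝ) (hcont : ContinuousOn f (Set.Icc 0 1))
    (hmaps : Set.MapsTo f (Set.Icc 0 1) (Set.Icc 0 1))
    (hsurj : f '' Set.Icc (0 : ℝ) 1 = Set.Icc (0 : ℝ) 1)
    (A : Set ℝ) (hA : SurjInterval f A)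
    (a b : ℝ) (hab : a ≤ b) (hJ : Set.Icc a b ⊆ Set.Icc (0 : ℝ) 1) :
    ∃ c d : ℝ, c ≤ d ∧ Set.Icc c d ⊆ A ∧
      f '' Set.Icc c d = Set.Icc a b ∧
      f '' ({c, d} : Set ℝ) = ({a, b} : Set ℝ) ∧
      (Set.Icc c d ∩ rightAccessible f A).Nonempty := by
  obtain ⟨α, β, hαβ, hAeq, hAsub, hAim, -⟩ := hA
  subst hAeq
  have hcontA : ContinuousOn f (Set.Icc α β) := hcont.mono hAsub
  have ha01 : a ∈ Set.Icc (0 : ℝ) 1 := hJ ⟨le_refl _, hab⟩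
  have hb01 : b ∈ Set.Icc (0 : ℝ) 1 := hJ ⟨hab, le_refl _⟩
  -- last points of A with values a and b
  have key : ∀ v : ℝ, v ∈ Set.Icc (0 : ℝ) 1 →
      ∃ cv ∈ Set.Icc α β, f cv = v ∧ ∀ y ∈ Set.Icc α β, cv < y → f y ≠ v := by
    intro v hv
    obtain ⟨x0, hx0, hfx0⟩ := hAim ▸ hv
    set S : Set ℝ := Set.Icc α β ∩ f ⁻¹' {v} with hS
    have hSne : S.Nonempty := ⟨x0, hx0, hfx0⟩
    have hSclosed : IsClosed S :=
      ContinuousOn.preimage_isClosed_of_isClosed hcontA isClosed_Icc isClosed_singleton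
    have hSbdd : BddAbove S := ⟨β, fun x hx => hx.1.2⟩
    refine ⟨sSup S, (hSclosed.csSup_mem hSne hSbdd).1, (hSclosed.csSup_mem hSne hSbdd).2, ?_⟩
    intro y hy hlt hfy
    exact absurd (le_csSup hSbdd (⟨hy, hfy⟩ : y ∈ S)) (not_le.2 hlt)
  obtain ⟨cb, hcbA, hfcb, hcbmax⟩ := key b hb01
  obtain ⟨cA, hcaA, hfca, hcamax⟩ := key a ha01
  rcases le_total cb cA with hcase | hcase
  · -- cb ≤ cA : take c = cb (last b-point), find d with f d = a
    obtain ⟨d, hcd, hdA, hfd, him⟩ :=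
      aux_interval f α β hcontA cb cA hcbA hcaA hcase a b hfcb hfca hcbmax
    refine ⟨cb, d, hcd, Set.Icc_subset_Icc hcbA.1 hdA.2, ?_, ?_, ?_⟩
    · rw [him, Set.uIcc_of_le hab]
    · rw [Set.image_pair, hfcb, hfd, Set.pair_comm]
    · exact ⟨cb, ⟨le_refl _, hcd⟩, hcbA, fun y hy hlt => hfcb ▸ hcbmax y hy hlt⟩
  · -- cA ≤ cb : take c = cA (last a-point), find d with f d = b
    obtain ⟨d, hcd, hdA, hfd, him⟩ :=
      aux_interval f α β hcontA cA cb hcaA hcbA hcase b a hfca hfcb hcamax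
    refine ⟨cA, d, hcd, Set.Icc_subset_Icc hcaA.1 hdA.2, ?_, ?_, ?_⟩
    · rw [him, Set.uIcc_comm, Set.uIcc_of_le hab]
    · rw [Set.image_pair, hfca, hfd]
    · exact ⟨cA, ⟨le_refl _, hcd⟩, hcaA, fun y hy hlt => hfca ▸ hcamax y hy hlt⟩
end

section
/- If f : [0,1] → [0,1] and g : [0,1] → [0,1] are continuous surjections each having at least two surjective intervals, then the composition f ∘ g has at least three surjective intervals. -/
open Set Filter Topology

/-!
Two distinct surjective intervals of a map meet in at most one point: the endpoints of a
surjective interval are the only points of it where the map takes the values `0` or `1`.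
So `f` has a point `t` such that both `[0, t]` and `[t, 1]` are mapped onto `[0, 1]`. If
`g s = t` with `s` inside a surjective interval `[c, d]` of `g`, then `g` maps each of `[c, s]`
and `[s, d]` onto an interval joining `t` to `0` or `1`, so `f ∘ g` maps both onto `[0, 1]`,
as it does the other surjective interval of `g`. These three intervals overlap in at most
single points, and each contains a surjective interval of `f ∘ g`, spanned by a closest pair
of a `0`-point and a `1`-point.
-/

theorem Set.Icc_inter_Icc_subsingleton {α : Type*} [PartialOrder α] {a₁ b₁ a₂ b₂ : α}
    (h : b₁ ≤ a₂) : (Icc a₁ b₁ ∩ Icc a₂ b₂).Subsingleton :=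
  fun _ hx _ hy =>
    le_antisymm (hx.1.2.trans (h.trans hy.2.1)) (hy.1.2.trans (h.trans hx.2.1))

theorem Set.eq_and_eq_or_eq_and_eq_of_uIcc_eq {α : Type*} [LinearOrder α] {x y a b : α}
    (h : uIcc x y = Icc a b) : x = a ∧ y = b ∨ x = b ∧ y = a := by
  rw [uIcc, Icc_eq_Icc_iff inf_le_sup] at h
  rcases le_total x y with hxy | hyx <;> simp_all

theorem IsCompact.exists_min_dist_of_mem_image {h : ℝ → ℝ} {s : Set ℝ} (hs : IsCompact s)
    (hc : ContinuousOn h s) {y₀ y₁ : ℝ} (h₀ : y₀ ∈ h '' s) (h₁ : y₁ ∈ h '' s) :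
    ∃ u ∈ s, ∃ v ∈ s, h u = y₀ ∧ h v = y₁ ∧
      ∀ u' ∈ s, ∀ v' ∈ s, h u' = y₀ → h v' = y₁ → |v - u| ≤ |v' - u'| := by
  have hK : ∀ y, IsCompact (s ∩ h ⁻¹' {y}) := fun y =>
    hs.of_isClosed_subset (hc.preimage_isClosed_of_isClosed hs.isClosed isClosed_singleton)
      inter_subset_left
  have hne : ((s ∩ h ⁻¹' {y₀}) ×ˢ (s ∩ h ⁻¹' {y₁})).Nonempty := by
    obtain ⟨u, hu, hu₀⟩ := h₀
    obtain ⟨v, hv, hv₁⟩ := h₁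
    exact ⟨(u, v), ⟨hu, hu₀⟩, hv, hv₁⟩
  obtain ⟨⟨u, v⟩, ⟨⟨hu, hu₀⟩, hv, hv₁⟩, hmin⟩ :=
    ((hK y₀).prod (hK y₁)).exists_isMinOn hne (continuous_snd.sub continuous_fst).abs.continuousOn
  exact ⟨u, hu, v, hv, hu₀, hv₁, fun u' hu' v' hv' h₀ h₁ =>
    isMinOn_iff.1 hmin (u', v') ⟨⟨hu', h₀⟩, hv', h₁⟩⟩

namespace SurjInterval

variable {h : ℝ → ℝ} {S T : Set ℝ}

theorem nonempty (hS : SurjInterval h S) : S.Nonempty := by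
  obtain ⟨a, b, hab, rfl, -⟩ := hS
  exact nonempty_Icc.2 hab

theorem not_subsingleton (hS : SurjInterval h S) : ¬ S.Subsingleton := by
  obtain ⟨a, b, -, rfl, -, himg, -⟩ := hS
  intro hsub
  have := hsub.image h
  rw [himg] at this
  exact zero_ne_one (this (left_mem_Icc.2 zero_le_one) (right_mem_Icc.2 zero_le_one))

theorem ne_of_subset_of_inter_subsingleton (hS : SurjInterval h S) {X Y : Set ℝ} (hSX : S ⊆ X)
    (hTY : T ⊆ Y) (hXY : (X ∩ Y).Subsingleton) : S ≠ T := by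
  rintro rfl
  exact hS.not_subsingleton (hXY.anti (subset_inter hSX hTY))

theorem eq_of_subset (hS : SurjInterval h S) (hT : SurjInterval h T) (hST : S ⊆ T) : S = T := by
  obtain ⟨a, b, -, rfl, -, himg, -⟩ := hS
  obtain ⟨-, -, -, -, -, -, hmin⟩ := hT
  by_contra hne
  exact hmin a b (hST.ssubset_of_ne hne) himg

theorem uIcc_eq (hc : ContinuousOn h (Icc 0 1)) (hS : SurjInterval h S) {x y : ℝ} (hx : x ∈ S)
    (hy : y ∈ S) (hx₀ : h x = 0) (hy₁ : h y = 1) : uIcc x y = S := by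
  obtain ⟨a, b, -, rfl, hS01, himg, hmin⟩ := hS
  have hxy : uIcc x y ⊆ Icc a b := uIcc_subset_Icc hx hy
  by_contra hne
  refine hmin (x ⊓ y) (x ⊔ y) (hxy.ssubset_of_ne hne)
    (Subset.antisymm (himg ▸ image_mono hxy) ?_)
  have := intermediate_value_uIcc (hc.mono (hxy.trans hS01))
  rwa [hx₀, hy₁, uIcc_of_le zero_le_one] at this

theorem apply_eq_zero_or_one_iff (hc : ContinuousOn h (Icc 0 1)) {a b x : ℝ}
    (hS : SurjInterval h (Icc a b)) (hx : x ∈ Icc a b) : h x = 0 ∨ h x = 1 ↔ x = a ∨ x = b := by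
  obtain ⟨-, -, -, -, -, himg, -⟩ := id hS
  obtain ⟨u, hu, hu₀⟩ : (0 : ℝ) ∈ h '' Icc a b := himg ▸ left_mem_Icc.2 zero_le_one
  obtain ⟨v, hv, hv₁⟩ : (1 : ℝ) ∈ h '' Icc a b := himg ▸ right_mem_Icc.2 zero_le_one
  constructor
  · rintro (hx₀ | hx₁)
    · exact (eq_and_eq_or_eq_and_eq_of_uIcc_eq (hS.uIcc_eq hc hx hv hx₀ hv₁)).imp
        And.left And.left
    · exact (eq_and_eq_or_eq_and_eq_of_uIcc_eq (hS.uIcc_eq hc hu hx hu₀ hx₁)).symm.imp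
        And.right And.right
  · rcases eq_and_eq_or_eq_and_eq_of_uIcc_eq (hS.uIcc_eq hc hu hv hu₀ hv₁) with
      ⟨rfl, rfl⟩ | ⟨rfl, rfl⟩ <;> rintro (rfl | rfl) <;> simp [*]

theorem left_le_right {a b : ℝ} (hS : SurjInterval h (Icc a b)) : a ≤ b :=
  nonempty_Icc.1 hS.nonempty

theorem right_le_left_or_right_le_left (hc : ContinuousOn h (Icc 0 1)) {a₁ b₁ a₂ b₂ : ℝ}
    (h₁ : SurjInterval h (Icc a₁ b₁)) (h₂ : SurjInterval h (Icc a₂ b₂))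
    (hne : Icc a₁ b₁ ≠ Icc a₂ b₂) : b₁ ≤ a₂ ∨ b₂ ≤ a₁ := by
  wlog ha : a₁ ≤ a₂ generalizing a₁ b₁ a₂ b₂
  · exact (this h₂ h₁ hne.symm (le_of_not_ge ha)).symm
  refine (le_or_gt b₁ a₂).imp_right fun hlt => absurd ?_ hne
  have ha₂ : a₂ = a₁ ∨ a₂ = b₁ := (h₁.apply_eq_zero_or_one_iff hc ⟨ha, hlt.le⟩).1
    ((h₂.apply_eq_zero_or_one_iff hc (left_mem_Icc.2 h₂.left_le_right)).2 (Or.inl rfl))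
  obtain rfl : a₂ = a₁ := ha₂.resolve_right hlt.ne
  rcases le_total b₁ b₂ with hb | hb
  · exact h₁.eq_of_subset h₂ (Icc_subset_Icc_right hb)
  · exact (h₂.eq_of_subset h₁ (Icc_subset_Icc_right hb)).symm

theorem inter_subsingleton (hc : ContinuousOn h (Icc 0 1)) (hS : SurjInterval h S)
    (hT : SurjInterval h T) (hne : S ≠ T) : (S ∩ T).Subsingleton := by
  obtain ⟨a₁, b₁, -, rfl, -⟩ := id hS
  obtain ⟨a₂, b₂, -, rfl, -⟩ := id hT
  rcases hS.right_le_left_or_right_le_left hc hT hne with hle | hle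
  · exact Icc_inter_Icc_subsingleton hle
  · exact inter_comm _ (Icc a₁ b₁) ▸ Icc_inter_Icc_subsingleton hle

end SurjInterval

section

variable {h : ℝ → ℝ}

theorem surjInterval_uIcc_of_minimal (hc : ContinuousOn h (Icc 0 1))
    (hm : MapsTo h (Icc 0 1) (Icc 0 1)) {u v : ℝ} (h01 : uIcc u v ⊆ Icc 0 1) (hu : h u = 0)
    (hv : h v = 1)
    (hmin : ∀ u' ∈ uIcc u v, ∀ v' ∈ uIcc u v, h u' = 0 → h v' = 1 → |v - u| ≤ |v' - u'|) :
    SurjInterval h (uIcc u v) := by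
  refine ⟨u ⊓ v, u ⊔ v, inf_le_sup, rfl, h01, ?_, ?_⟩
  · refine Subset.antisymm (image_subset_iff.2 (hm.mono_left h01)) ?_
    have := intermediate_value_uIcc (hc.mono h01)
    rwa [hu, hv, uIcc_of_le zero_le_one] at this
  · intro c d hcd himg
    obtain ⟨u', hu', hu'₀⟩ : (0 : ℝ) ∈ h '' Icc c d := himg ▸ left_mem_Icc.2 zero_le_one
    obtain ⟨v', hv', hv'₁⟩ : (1 : ℝ) ∈ h '' Icc c d := himg ▸ right_mem_Icc.2 zero_le_one
    obtain ⟨hc', hd'⟩ := (Icc_subset_Icc_iff (hu'.1.trans hu'.2)).1 hcd.subset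
    have hlen : u ⊔ v - u ⊓ v ≤ d - c := calc
      u ⊔ v - u ⊓ v = |v - u| := max_sub_min_eq_abs u v
      _ ≤ |v' - u'| := hmin u' (hcd.subset hu') v' (hcd.subset hv') hu'₀ hv'₁
      _ ≤ d - c := abs_sub_le_iff.2 ⟨by linarith [hu'.1, hv'.2], by linarith [hu'.2, hv'.1]⟩
    refine hcd.ne ?_
    rw [uIcc, le_antisymm hc' (by linarith), le_antisymm hd' (by linarith)]

theorem exists_surjInterval_subset (hc : ContinuousOn h (Icc 0 1))
    (hm : MapsTo h (Icc 0 1) (Icc 0 1)) {p q : ℝ} (hpq : Icc p q ⊆ Icc 0 1)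
    (hs : SurjOn h (Icc p q) (Icc 0 1)) : ∃ S ⊆ Icc p q, SurjInterval h S := by
  obtain ⟨u, hu, v, hv, hu₀, hv₁, hmin⟩ := isCompact_Icc.exists_min_dist_of_mem_image
    (hc.mono hpq) (hs (left_mem_Icc.2 zero_le_one)) (hs (right_mem_Icc.2 zero_le_one))
  have huv : uIcc u v ⊆ Icc p q := uIcc_subset_Icc hu hv
  exact ⟨_, huv, surjInterval_uIcc_of_minimal hc hm (huv.trans hpq) hu₀ hv₁
    fun u' hu' v' hv' => hmin u' (huv hu') v' (huv hv')⟩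

theorem exists_surjOn_Icc_zero_and_Icc_one (hc : ContinuousOn h (Icc 0 1))
    (h2 : ∃ A B : Set ℝ, SurjInterval h A ∧ SurjInterval h B ∧ A ≠ B) :
    ∃ t ∈ Icc (0 : ℝ) 1, SurjOn h (Icc 0 t) (Icc 0 1) ∧ SurjOn h (Icc t 1) (Icc 0 1) := by
  have key : ∀ {a₁ b₁ a₂ b₂ : ℝ}, SurjInterval h (Icc a₁ b₁) → SurjInterval h (Icc a₂ b₂) →
      b₁ ≤ a₂ → ∃ t ∈ Icc (0 : ℝ) 1,
        SurjOn h (Icc 0 t) (Icc 0 1) ∧ SurjOn h (Icc t 1) (Icc 0 1) := by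
    intro a₁ b₁ a₂ b₂ h₁ h₂ hle
    obtain ⟨-, -, -, -, h₁01, h₁img, -⟩ := id h₁
    obtain ⟨-, -, -, -, h₂01, h₂img, -⟩ := id h₂
    exact ⟨a₂, h₂01 (left_mem_Icc.2 h₂.left_le_right),
      SurjOn.mono (fun x hx => ⟨(h₁01 hx).1, hx.2.trans hle⟩) subset_rfl h₁img.ge,
      SurjOn.mono (fun x hx => ⟨hx.1, (h₂01 hx).2⟩) subset_rfl h₂img.ge⟩
  obtain ⟨A, B, hA, hB, hne⟩ := h2
  obtain ⟨a₁, b₁, -, rfl, -⟩ := id hA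
  obtain ⟨a₂, b₂, -, rfl, -⟩ := id hB
  exact (hA.right_le_left_or_right_le_left hc hB hne).elim (key hA hB) (key hB hA)

end

theorem surjOn_comp_uIcc {f g : ℝ → ℝ} {t x y : ℝ} (hf₀ : SurjOn f (Icc 0 t) (Icc 0 1))
    (hf₁ : SurjOn f (Icc t 1) (Icc 0 1)) (hg : ContinuousOn g (uIcc x y))
    (hx : g x = 0 ∨ g x = 1) (hy : g y = t) : SurjOn (f ∘ g) (uIcc x y) (Icc 0 1) := by
  have hg' : SurjOn g (uIcc x y) (uIcc (g x) t) := hy ▸ intermediate_value_uIcc hg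
  rcases hx with hx | hx <;> rw [hx] at hg'
  · exact hf₀.comp (hg'.mono subset_rfl Icc_subset_uIcc)
  · exact hf₁.comp (hg'.mono subset_rfl Icc_subset_uIcc')

theorem SurjInterval.exists_surjOn_comp_Icc_left_and_right {f g : ℝ → ℝ} {t c d : ℝ}
    (ht : t ∈ Icc (0 : ℝ) 1) (hf₀ : SurjOn f (Icc 0 t) (Icc 0 1))
    (hf₁ : SurjOn f (Icc t 1) (Icc 0 1)) (hgc : ContinuousOn g (Icc 0 1))
    (hg : SurjInterval g (Icc c d)) :
    ∃ s ∈ Icc c d, SurjOn (f ∘ g) (Icc c s) (Icc 0 1) ∧ SurjOn (f ∘ g) (Icc s d) (Icc 0 1) := by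
  obtain ⟨-, -, -, -, h01, himg, -⟩ := id hg
  have hcd := hg.left_le_right
  obtain ⟨s, hs, hgs⟩ : t ∈ g '' Icc c d := himg ▸ ht
  refine ⟨s, hs, ?_, ?_⟩
  · rw [← uIcc_of_le hs.1]
    exact surjOn_comp_uIcc hf₀ hf₁
      (hgc.mono (uIcc_subset_Icc (h01 (left_mem_Icc.2 hcd)) (h01 hs)))
      ((hg.apply_eq_zero_or_one_iff hgc (left_mem_Icc.2 hcd)).2 (Or.inl rfl)) hgs
  · rw [← uIcc_of_ge hs.2]
    exact surjOn_comp_uIcc hf₀ hf₁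
      (hgc.mono (uIcc_subset_Icc (h01 (right_mem_Icc.2 hcd)) (h01 hs)))
      ((hg.apply_eq_zero_or_one_iff hgc (right_mem_Icc.2 hcd)).2 (Or.inr rfl)) hgs

theorem comp_has_three_surjective_intervals_general
    (f g : ℝ → ℝ)
    (hfc : ContinuousOn f (Set.Icc 0 1)) (hfm : Set.MapsTo f (Set.Icc 0 1) (Set.Icc 0 1))
    (hgc : ContinuousOn g (Set.Icc 0 1)) (hgm : Set.MapsTo g (Set.Icc 0 1) (Set.Icc 0 1))
    (hf2 : ∃ A B : Set ℝ, SurjInterval f A ∧ SurjInterval f B ∧ A ≠ B)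
    (hg2 : ∃ A B : Set ℝ, SurjInterval g A ∧ SurjInterval g B ∧ A ≠ B) :
    ∃ A B C : Set ℝ, SurjInterval (f ∘ g) A ∧ SurjInterval (f ∘ g) B ∧
      SurjInterval (f ∘ g) C ∧ A ≠ B ∧ A ≠ C ∧ B ≠ C := by
  obtain ⟨t, ht, hf₀, hf₁⟩ := exists_surjOn_Icc_zero_and_Icc_one hfc hf2
  obtain ⟨B, B', hB, hB', hne⟩ := hg2
  have hBB' := hB.inter_subsingleton hgc hB' hne
  obtain ⟨c, d, -, rfl, hB01, -⟩ := id hB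
  obtain ⟨c', d', -, rfl, hB'01, hgB', -⟩ := hB'
  obtain ⟨s, hs, h₁, h₂⟩ := hB.exists_surjOn_comp_Icc_left_and_right ht hf₀ hf₁ hgc
  have h₃ : SurjOn (f ∘ g) (Icc c' d') (Icc 0 1) :=
    (hf₀.mono (Icc_subset_Icc_right ht.2) subset_rfl).comp hgB'.ge
  have hcs : Icc c s ⊆ Icc c d := Icc_subset_Icc_right hs.2
  have hsd : Icc s d ⊆ Icc c d := Icc_subset_Icc_left hs.1
  have hfgc := hfc.comp hgc hgm
  have hfgm := hfm.comp hgm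
  obtain ⟨S₁, hS₁, hS₁'⟩ := exists_surjInterval_subset hfgc hfgm (hcs.trans hB01) h₁
  obtain ⟨S₂, hS₂, hS₂'⟩ := exists_surjInterval_subset hfgc hfgm (hsd.trans hB01) h₂
  obtain ⟨S₃, hS₃, hS₃'⟩ := exists_surjInterval_subset hfgc hfgm hB'01 h₃
  exact ⟨S₁, S₂, S₃, hS₁', hS₂', hS₃',
    hS₁'.ne_of_subset_of_inter_subsingleton hS₁ hS₂ (Icc_inter_Icc_subsingleton le_rfl),
    hS₁'.ne_of_subset_of_inter_subsingleton (hS₁.trans hcs) hS₃ hBB',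
    hS₂'.ne_of_subset_of_inter_subsingleton (hS₂.trans hsd) hS₃ hBB'⟩

/-- If `f` and `g` are continuous surjections of `[0,1]` each having at least
two surjective intervals, then the composition `f ∘ g` has at least three surjective
intervals. -/
theorem comp_has_three_surjective_intervals
    (f g : ℝ → ℝ)
    (hfc : ContinuousOn f (Set.Icc 0 1)) (hfm : Set.MapsTo f (Set.Icc 0 1) (Set.Icc 0 1))
    (hfs : f '' Set.Icc (0 : ℝ) 1 = Set.Icc (0 : ℝ) 1)
    (hgc : ContinuousOn g (Set.Icc 0 1)) (hgm : Set.MapsTo g (Set.Icc 0 1) (Set.Icc 0 1))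
    (hgs : g '' Set.Icc (0 : ℝ) 1 = Set.Icc (0 : ℝ) 1)
    (hf2 : ∃ A B : Set ℝ, SurjInterval f A ∧ SurjInterval f B ∧ A ≠ B)
    (hg2 : ∃ A B : Set ℝ, SurjInterval g A ∧ SurjInterval g B ∧ A ≠ B) :
    ∃ A B C : Set ℝ, SurjInterval (f ∘ g) A ∧ SurjInterval (f ∘ g) B ∧
      SurjInterval (f ∘ g) C ∧ A ≠ B ∧ A ≠ C ∧ B ≠ C :=
  comp_has_three_surjective_intervals_general f g hfc hfm hgc hgm hf2 hg2
end

section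
/- Let f : [0,1] → [0,1] be a continuous surjection and ε > 0. Then f is P_ε if and only if there exist 0 ≤ x_1 < x_2 < x_3 ≤ 1 such that either (a) |f(x_1) − 0| < ε, |f(x_3) − 0| < ε and |f(x_2) − 1| < ε, or (b) |f(x_1) − 1| < ε, |f(x_3) − 1| < ε and |f(x_2) − 0| < ε. -/
open Set Filter Topology Metric

/-- A continuous surjection `f : [0,1] → [0,1]` is `P_ε` if for every pair of closed intervals
`A, B ⊆ [0,1]` with `A ∪ B = [0,1]`, the Hausdorff distance of `f(A)` or of `f(B)` to `[0,1]`
is smaller than `ε`. -/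
def IsPeps (f : ℝ → ℝ) (ε : ℝ) : Prop :=
  ∀ a b c d : ℝ, Set.Icc a b ∪ Set.Icc c d = Set.Icc (0 : ℝ) 1 →
    Metric.hausdorffDist (f '' Set.Icc a b) (Set.Icc (0 : ℝ) 1) < ε ∨
    Metric.hausdorffDist (f '' Set.Icc c d) (Set.Icc (0 : ℝ) 1) < ε

/-!
Let `L` and `H` be the sets of `x ∈ [0,1]` with `f x` within `ε` of `0`, resp. of `1`. By the
intermediate value theorem, for an interval `I ⊆ [0,1]`, `f(I)` is `ε`-close to `[0,1]` exactly
when `I` meets both `L` and `H`. A zigzag `x₁ < x₂ < x₃` alternating between `L` and `H` therefore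
forces `P_ε`: whichever covering interval contains `x₂` also contains `x₁` or `x₃`. Conversely, for
`ε ≤ 1/2` the sets `L` and `H` are separated (neither meets the closure of the other); without a
zigzag one of them lies entirely to the left of the other, so some `c` lies strictly between them
and the cover `[0,c] ∪ [c,1]` violates `P_ε`. For `ε > 1/2` a whole interval around a point where
`f = 1/2` lies in `L ∩ H`.
-/

section Zigzag

variable {α : Type*} [LinearOrder α]

def HasZigzag (S T : Set α) : Prop :=
  ∃ x₁ ∈ S, ∃ x₂ ∈ T, ∃ x₃ ∈ S, x₁ < x₂ ∧ x₂ < x₃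

theorem forall_lt_or_forall_lt_of_not_hasZigzag {S T : Set α} (hST : Disjoint S T)
    (hS : ¬HasZigzag S T) (hT : ¬HasZigzag T S) :
    (∀ s ∈ S, ∀ t ∈ T, s < t) ∨ ∀ t ∈ T, ∀ s ∈ S, t < s := by
  by_contra! h
  obtain ⟨⟨s₀, hs₀, t₀, ht₀, hts₀⟩, ⟨t₁, ht₁, s₁, hs₁, hst₁⟩⟩ := h
  have h₀ : t₀ < s₀ := hts₀.lt_of_ne (hST.ne_of_mem hs₀ ht₀).symm
  have h₁ : s₁ < t₁ := hst₁.lt_of_ne (hST.ne_of_mem hs₁ ht₁)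
  rcases lt_trichotomy s₀ t₁ with h | h | h
  · exact hT ⟨t₀, ht₀, s₀, hs₀, t₁, ht₁, h₀, h⟩
  · exact hST.ne_of_mem hs₀ ht₁ h
  · exact hS ⟨s₁, hs₁, t₁, ht₁, s₀, hs₀, h₁, h⟩

theorem HasZigzag.inter_nonempty_or {S T I J : Set α} (h : HasZigzag S T)
    (hI : I.OrdConnected) (hJ : J.OrdConnected) (hS : S ⊆ I ∪ J) (hT : T ⊆ I ∪ J) :
    ((I ∩ S).Nonempty ∧ (I ∩ T).Nonempty) ∨ ((J ∩ S).Nonempty ∧ (J ∩ T).Nonempty) := by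
  obtain ⟨x₁, hx₁, x₂, hx₂, x₃, hx₃, h₁₂, h₂₃⟩ := h
  have between {K : Set α} (hK : K.OrdConnected) (h₁ : x₁ ∈ K) (h₃ : x₃ ∈ K) : x₂ ∈ K :=
    hK.out h₁ h₃ ⟨h₁₂.le, h₂₃.le⟩
  rcases hT hx₂ with h₂ | h₂ <;> rcases hS hx₁ with h₁ | h₁
  · exact Or.inl ⟨⟨x₁, h₁, hx₁⟩, ⟨x₂, h₂, hx₂⟩⟩
  · rcases hS hx₃ with h₃ | h₃
    · exact Or.inl ⟨⟨x₃, h₃, hx₃⟩, ⟨x₂, h₂, hx₂⟩⟩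
    · exact Or.inr ⟨⟨x₁, h₁, hx₁⟩, ⟨x₂, between hJ h₁ h₃, hx₂⟩⟩
  · rcases hS hx₃ with h₃ | h₃
    · exact Or.inl ⟨⟨x₁, h₁, hx₁⟩, ⟨x₂, between hI h₁ h₃, hx₂⟩⟩
    · exact Or.inr ⟨⟨x₃, h₃, hx₃⟩, ⟨x₂, h₂, hx₂⟩⟩
  · exact Or.inr ⟨⟨x₁, h₁, hx₁⟩, ⟨x₂, h₂, hx₂⟩⟩

theorem hasZigzag_of_Icc_subset [DenselyOrdered α] {S T : Set α} {x y : α} (hxy : x < y)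
    (h : Icc x y ⊆ S ∩ T) : HasZigzag S T := by
  obtain ⟨z, hxz, hzy⟩ := exists_between hxy
  exact ⟨x, (h (left_mem_Icc.2 hxy.le)).1, z, (h ⟨hxz.le, hzy.le⟩).2,
    y, (h (right_mem_Icc.2 hxy.le)).1, hxz, hzy⟩

end Zigzag

theorem exists_Icc_subset_of_mem_nhdsWithin_Icc {α : Type*} [LinearOrder α] [TopologicalSpace α]
    [OrderTopology α] [DenselyOrdered α] [NoMinOrder α] [NoMaxOrder α] {a b m : α} {s : Set α}
    (hab : a < b) (hm : m ∈ Icc a b) (hs : s ∈ 𝓝[Icc a b] m) :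
    ∃ x y, x < y ∧ Icc x y ⊆ s := by
  rcases hm.2.lt_or_eq with hmb | rfl
  · have hs' : s ∈ 𝓝[≥] m := by
      rw [← nhdsWithin_Icc_eq_nhdsGE hmb]
      exact nhdsWithin_mono _ (Icc_subset_Icc_left hm.1) hs
    obtain ⟨u, hmu, hsub⟩ := mem_nhdsGE_iff_exists_Icc_subset.1 hs'
    exact ⟨m, u, hmu, hsub⟩
  · rw [nhdsWithin_Icc_eq_nhdsLE hab] at hs
    obtain ⟨l, hlm, hsub⟩ := mem_nhdsLE_iff_exists_Icc_subset.1 hs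
    exact ⟨l, m, hlm, hsub⟩

theorem exists_separating_point_of_forall_le {α : Type*} [ConditionallyCompleteLinearOrder α]
    [TopologicalSpace α] [OrderTopology α] [DenselyOrdered α] {S T : Set α}
    (hS : S.Nonempty) (hT : T.Nonempty) (hle : ∀ s ∈ S, ∀ t ∈ T, s ≤ t)
    (hST : Disjoint (closure S) T) (hTS : Disjoint S (closure T)) :
    ∃ c, (∀ s ∈ S, s < c) ∧ ∀ t ∈ T, c < t := by
  have hSb : BddAbove S := hT.elim fun t ht => ⟨t, fun s hs => hle s hs t ht⟩
  have hTb : BddBelow T := hS.elim fun s hs => ⟨s, hle s hs⟩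
  rcases (csSup_le hS fun s hs => le_csInf hT (hle s hs)).lt_or_eq with hlt | heq
  · obtain ⟨c, hSc, hcT⟩ := exists_between hlt
    exact ⟨c, fun s hs => (le_csSup hSb hs).trans_lt hSc,
      fun t ht => hcT.trans_le (csInf_le hTb ht)⟩
  · refine ⟨sSup S, fun s hs => (le_csSup hSb hs).lt_of_ne ?_, fun t ht => ?_⟩
    · exact hTS.ne_of_mem hs (heq ▸ csInf_mem_closure hT hTb)
    · exact (heq ▸ csInf_le hTb ht).lt_of_ne (hST.ne_of_mem (csSup_mem_closure hS hSb) ht)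

theorem disjoint_closure_inter_preimage_ball {X Y : Type*} [TopologicalSpace X]
    [PseudoMetricSpace Y] {f : X → Y} {K : Set X} (hK : IsClosed K) (hf : ContinuousOn f K)
    {u v : Y} {δ ε : ℝ} (h : δ + ε ≤ dist u v) :
    Disjoint (closure (K ∩ f ⁻¹' ball u δ)) (K ∩ f ⁻¹' ball v ε) := by
  have hcl : closure (K ∩ f ⁻¹' ball u δ) ⊆ K ∩ f ⁻¹' closedBall u δ :=
    closure_minimal (inter_subset_inter_right _ (preimage_mono ball_subset_closedBall))
      (hf.preimage_isClosed_of_isClosed hK isClosed_closedBall)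
  exact ((closedBall_disjoint_ball h).preimage f).mono (hcl.trans inter_subset_right)
    inter_subset_right

theorem exists_dist_lt_of_hausdorffDist_lt_of_subset {α : Type*} [PseudoMetricSpace α]
    {s t : Set α} {r : ℝ} (hs : s.Nonempty) (hst : s ⊆ t) (ht : Bornology.IsBounded t)
    (h : hausdorffDist s t < r) {y : α} (hy : y ∈ t) : ∃ x ∈ s, dist x y < r :=
  exists_dist_lt_of_hausdorffDist_lt' hy h
    (hausdorffEDist_ne_top_of_nonempty_of_bounded hs ⟨y, hy⟩ (ht.subset hst) ht)

theorem hausdorffDist_image_Icc_le {f : ℝ → ℝ} {a b s t : ℝ} (hc : ContinuousOn f (Icc a b))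
    (hm : MapsTo f (Icc a b) (Icc 0 1)) (hs : s ∈ Icc a b) (ht : t ∈ Icc a b) :
    hausdorffDist (f '' Icc a b) (Icc 0 1) ≤ max (f s) (1 - f t) := by
  have hfs : 0 ≤ f s := (hm hs).1
  have hft : f t ≤ 1 := (hm ht).2
  refine hausdorffDist_le_of_mem_dist (le_max_of_le_left hfs) ?_ fun y hy => ?_
  · rintro _ ⟨x, hx, rfl⟩
    exact ⟨f x, hm hx, by rw [dist_self]; exact le_max_of_le_left hfs⟩
  rcases le_or_gt y (f s) with hys | hys
  · refine ⟨f s, mem_image_of_mem f hs, le_max_of_le_left ?_⟩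
    rw [Real.dist_eq, abs_of_nonpos (by linarith)]
    linarith [hy.1]
  rcases le_or_gt (f t) y with hyt | hyt
  · refine ⟨f t, mem_image_of_mem f ht, le_max_of_le_right ?_⟩
    rw [Real.dist_eq, abs_of_nonneg (by linarith)]
    linarith [hy.2]
  have hst : uIcc s t ⊆ Icc a b := ordConnected_Icc.uIcc_subset hs ht
  obtain ⟨x, hx, rfl⟩ := intermediate_value_uIcc (hc.mono hst) (Icc_subset_uIcc ⟨hys.le, hyt.le⟩)
  exact ⟨f x, mem_image_of_mem f (hst hx), by rw [dist_self]; exact le_max_of_le_left hfs⟩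

section IsPeps

variable {f : ℝ → ℝ} {ε : ℝ}

theorem IsPeps.forall_exists_Icc_zero_or_Icc_one (hP : IsPeps f ε)
    (hm : MapsTo f (Icc 0 1) (Icc 0 1)) {c : ℝ} (hc : c ∈ Icc (0 : ℝ) 1) :
    (∀ y ∈ Icc (0 : ℝ) 1, ∃ x ∈ Icc 0 c, dist (f x) y < ε) ∨
      ∀ y ∈ Icc (0 : ℝ) 1, ∃ x ∈ Icc c 1, dist (f x) y < ε := by
  have dense {a b : ℝ} (hab : a ≤ b) (hsub : Icc a b ⊆ Icc 0 1)
      (h : hausdorffDist (f '' Icc a b) (Icc 0 1) < ε) :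
      ∀ y ∈ Icc (0 : ℝ) 1, ∃ x ∈ Icc a b, dist (f x) y < ε := fun y hy => by
    obtain ⟨_, ⟨x, hx, rfl⟩, hxy⟩ := exists_dist_lt_of_hausdorffDist_lt_of_subset
      ((nonempty_Icc.2 hab).image f) (hm.mono_left hsub).image_subset
      (isBounded_Icc 0 1) h hy
    exact ⟨x, hx, hxy⟩
  exact (hP 0 c c 1 (Icc_union_Icc_eq_Icc hc.1 hc.2)).imp
    (dense hc.1 (Icc_subset_Icc_right hc.2)) (dense hc.2 (Icc_subset_Icc_left hc.1))

theorem IsPeps.not_forall_lt (hP : IsPeps f ε) (hc : ContinuousOn f (Icc 0 1))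
    (hm : MapsTo f (Icc 0 1) (Icc 0 1)) {u v : ℝ} (hu : u ∈ Icc (0 : ℝ) 1)
    (hv : v ∈ Icc (0 : ℝ) 1) (huv : ε + ε ≤ dist u v)
    (hS : (Icc 0 1 ∩ f ⁻¹' ball u ε).Nonempty) (hT : (Icc 0 1 ∩ f ⁻¹' ball v ε).Nonempty) :
    ¬∀ s ∈ Icc 0 1 ∩ f ⁻¹' ball u ε, ∀ t ∈ Icc 0 1 ∩ f ⁻¹' ball v ε, s < t := by
  intro hlt
  obtain ⟨c, hSc, hcT⟩ := exists_separating_point_of_forall_le hS hT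
    (fun s hs t ht => (hlt s hs t ht).le)
    (disjoint_closure_inter_preimage_ball isClosed_Icc hc huv)
    (disjoint_closure_inter_preimage_ball isClosed_Icc hc (dist_comm u v ▸ huv)).symm
  obtain ⟨p, hp⟩ := hS
  obtain ⟨q, hq⟩ := hT
  have hc01 : c ∈ Icc (0 : ℝ) 1 := ⟨hp.1.1.trans (hSc p hp).le, (hcT q hq).le.trans hq.1.2⟩
  rcases hP.forall_exists_Icc_zero_or_Icc_one hm hc01 with h | h
  · obtain ⟨x, hx, hfx⟩ := h v hv
    exact (hcT x ⟨⟨hx.1, hx.2.trans hc01.2⟩, hfx⟩).not_ge hx.2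
  · obtain ⟨x, hx, hfx⟩ := h u hu
    exact (hSc x ⟨⟨hc01.1.trans hx.1, hx.2⟩, hfx⟩).not_ge hx.1

theorem IsPeps.hasZigzag (hP : IsPeps f ε) (hc : ContinuousOn f (Icc 0 1))
    (hm : MapsTo f (Icc 0 1) (Icc 0 1)) (hs : f '' Icc (0 : ℝ) 1 = Icc (0 : ℝ) 1)
    (hε : 0 < ε) (hε₂ : ε ≤ 1 / 2) :
    HasZigzag (Icc 0 1 ∩ f ⁻¹' ball 0 ε) (Icc 0 1 ∩ f ⁻¹' ball 1 ε) ∨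
      HasZigzag (Icc 0 1 ∩ f ⁻¹' ball 1 ε) (Icc 0 1 ∩ f ⁻¹' ball 0 ε) := by
  have h01 : ε + ε ≤ dist (0 : ℝ) 1 := by norm_num [Real.dist_eq]; linarith
  have hL : (Icc 0 1 ∩ f ⁻¹' ball 0 ε).Nonempty := by
    obtain ⟨p, hp, hfp⟩ := hs.symm ▸ left_mem_Icc.2 zero_le_one
    exact ⟨p, hp, by rw [mem_preimage, hfp]; exact mem_ball_self hε⟩
  have hH : (Icc 0 1 ∩ f ⁻¹' ball 1 ε).Nonempty := by
    obtain ⟨q, hq, hfq⟩ := hs.symm ▸ right_mem_Icc.2 zero_le_one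
    exact ⟨q, hq, by rw [mem_preimage, hfq]; exact mem_ball_self hε⟩
  have hLH : Disjoint (Icc 0 1 ∩ f ⁻¹' ball 0 ε) (Icc 0 1 ∩ f ⁻¹' ball 1 ε) :=
    (disjoint_closure_inter_preimage_ball isClosed_Icc hc h01).mono_left subset_closure
  by_contra! h
  rcases forall_lt_or_forall_lt_of_not_hasZigzag hLH h.1 h.2 with hlt | hlt
  · exact hP.not_forall_lt hc hm (left_mem_Icc.2 zero_le_one) (right_mem_Icc.2 zero_le_one)
      h01 hL hH hlt
  · exact hP.not_forall_lt hc hm (right_mem_Icc.2 zero_le_one) (left_mem_Icc.2 zero_le_one)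
      (dist_comm (0 : ℝ) 1 ▸ h01) hH hL hlt

end IsPeps

theorem hasZigzag_of_half_lt {f : ℝ → ℝ} {ε : ℝ} (hc : ContinuousOn f (Icc 0 1))
    (hs : f '' Icc (0 : ℝ) 1 = Icc (0 : ℝ) 1) (hε : 1 / 2 < ε) :
    HasZigzag (Icc 0 1 ∩ f ⁻¹' ball 0 ε) (Icc 0 1 ∩ f ⁻¹' ball 1 ε) := by
  obtain ⟨m, hm, hfm⟩ : (1 / 2 : ℝ) ∈ f '' Icc 0 1 := hs.symm ▸ ⟨by norm_num, by norm_num⟩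
  have hball : ball (1 / 2 : ℝ) (ε - 1 / 2) ⊆ ball 0 ε ∩ ball 1 ε := fun y hy => by
    rw [mem_ball, Real.dist_eq, abs_lt] at hy
    constructor <;> rw [mem_ball, Real.dist_eq, abs_lt] <;> constructor <;> linarith
  have hnhds : Icc 0 1 ∩ f ⁻¹' ball (1 / 2) (ε - 1 / 2) ∈ 𝓝[Icc 0 1] m :=
    inter_mem self_mem_nhdsWithin (hc m hm (by rw [hfm]; exact ball_mem_nhds _ (by linarith)))
  obtain ⟨x, y, hxy, hsub⟩ := exists_Icc_subset_of_mem_nhdsWithin_Icc zero_lt_one hm hnhds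
  refine hasZigzag_of_Icc_subset hxy fun z hz => ?_
  obtain ⟨hz01, hfz⟩ := hsub hz
  exact ⟨⟨hz01, (hball hfz).1⟩, ⟨hz01, (hball hfz).2⟩⟩

theorem isPeps_of_hasZigzag {f : ℝ → ℝ} {ε : ℝ} (hc : ContinuousOn f (Icc 0 1))
    (hm : MapsTo f (Icc 0 1) (Icc 0 1))
    (h : HasZigzag (Icc 0 1 ∩ f ⁻¹' ball 0 ε) (Icc 0 1 ∩ f ⁻¹' ball 1 ε) ∨
      HasZigzag (Icc 0 1 ∩ f ⁻¹' ball 1 ε) (Icc 0 1 ∩ f ⁻¹' ball 0 ε)) :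
    IsPeps f ε := by
  intro a b c d hU
  have close {a b : ℝ} (hsub : Icc a b ⊆ Icc 0 1)
      (hL : (Icc a b ∩ (Icc 0 1 ∩ f ⁻¹' ball 0 ε)).Nonempty)
      (hH : (Icc a b ∩ (Icc 0 1 ∩ f ⁻¹' ball 1 ε)).Nonempty) :
      hausdorffDist (f '' Icc a b) (Icc 0 1) < ε := by
    obtain ⟨s, hs, -, hfs⟩ := hL
    obtain ⟨t, ht, -, hft⟩ := hH
    rw [mem_preimage, mem_ball, Real.dist_eq, abs_lt] at hfs hft
    exact (hausdorffDist_image_Icc_le (hc.mono hsub) (hm.mono_left hsub) hs ht).trans_lt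
      (max_lt (by linarith) (by linarith))
  have hcover {y : ℝ} : Icc 0 1 ∩ f ⁻¹' ball y ε ⊆ Icc a b ∪ Icc c d :=
    hU ▸ inter_subset_left
  have hA : Icc a b ⊆ Icc 0 1 := hU ▸ subset_union_left
  have hB : Icc c d ⊆ Icc 0 1 := hU ▸ subset_union_right
  rcases h with h | h
  · exact (h.inter_nonempty_or ordConnected_Icc ordConnected_Icc hcover hcover).imp
      (fun h => close hA h.1 h.2) (fun h => close hB h.1 h.2)
  · exact (h.inter_nonempty_or ordConnected_Icc ordConnected_Icc hcover hcover).imp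
      (fun h => close hA h.2 h.1) (fun h => close hB h.2 h.1)

theorem exists_three_points_iff_hasZigzag {f : ℝ → ℝ} {ε : ℝ} :
    (∃ x₁ x₂ x₃ : ℝ, 0 ≤ x₁ ∧ x₁ < x₂ ∧ x₂ < x₃ ∧ x₃ ≤ 1 ∧
      ((|f x₁ - 0| < ε ∧ |f x₃ - 0| < ε ∧ |f x₂ - 1| < ε) ∨
        (|f x₁ - 1| < ε ∧ |f x₃ - 1| < ε ∧ |f x₂ - 0| < ε))) ↔
      HasZigzag (Icc 0 1 ∩ f ⁻¹' ball 0 ε) (Icc 0 1 ∩ f ⁻¹' ball 1 ε) ∨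
        HasZigzag (Icc 0 1 ∩ f ⁻¹' ball 1 ε) (Icc 0 1 ∩ f ⁻¹' ball 0 ε) := by
  simp only [HasZigzag, mem_inter_iff, mem_Icc, mem_preimage, mem_ball, Real.dist_eq]
  constructor
  · rintro ⟨x₁, x₂, x₃, h₁, h₁₂, h₂₃, h₃, ⟨hf₁, hf₃, hf₂⟩ | ⟨hf₁, hf₃, hf₂⟩⟩
    · exact Or.inl ⟨x₁, ⟨⟨h₁, by linarith⟩, hf₁⟩, x₂, ⟨⟨by linarith, by linarith⟩, hf₂⟩,
        x₃, ⟨⟨by linarith, h₃⟩, hf₃⟩, h₁₂, h₂₃⟩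
    · exact Or.inr ⟨x₁, ⟨⟨h₁, by linarith⟩, hf₁⟩, x₂, ⟨⟨by linarith, by linarith⟩, hf₂⟩,
        x₃, ⟨⟨by linarith, h₃⟩, hf₃⟩, h₁₂, h₂₃⟩
  · rintro (⟨x₁, ⟨⟨h₁, -⟩, hf₁⟩, x₂, ⟨-, hf₂⟩, x₃, ⟨⟨-, h₃⟩, hf₃⟩, h₁₂, h₂₃⟩ |
      ⟨x₁, ⟨⟨h₁, -⟩, hf₁⟩, x₂, ⟨-, hf₂⟩, x₃, ⟨⟨-, h₃⟩, hf₃⟩, h₁₂, h₂₃⟩)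
    · exact ⟨x₁, x₂, x₃, h₁, h₁₂, h₂₃, h₃, Or.inl ⟨hf₁, hf₃, hf₂⟩⟩
    · exact ⟨x₁, x₂, x₃, h₁, h₁₂, h₂₃, h₃, Or.inr ⟨hf₁, hf₃, hf₂⟩⟩

/-- A continuous surjection `f : [0,1] → [0,1]` is `P_ε` if and only if there
exist `0 ≤ x₁ < x₂ < x₃ ≤ 1` such that either `|f x₁ - 0|, |f x₃ - 0| < ε` and `|f x₂ - 1| < ε`,
or `|f x₁ - 1|, |f x₃ - 1| < ε` and `|f x₂ - 0| < ε`. -/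
theorem isPeps_iff_three_points
    (f : ℝ → ℝ)
    (hc : ContinuousOn f (Set.Icc 0 1)) (hm : Set.MapsTo f (Set.Icc 0 1) (Set.Icc 0 1))
    (hs : f '' Set.Icc (0 : ℝ) 1 = Set.Icc (0 : ℝ) 1)
    (ε : ℝ) (hε : 0 < ε) :
    IsPeps f ε ↔ ∃ x₁ x₂ x₃ : ℝ, 0 ≤ x₁ ∧ x₁ < x₂ ∧ x₂ < x₃ ∧ x₃ ≤ 1 ∧
      ((|f x₁ - 0| < ε ∧ |f x₃ - 0| < ε ∧ |f x₂ - 1| < ε) ∨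
        (|f x₁ - 1| < ε ∧ |f x₃ - 1| < ε ∧ |f x₂ - 0| < ε)) := by
  rw [exists_three_points_iff_hasZigzag]
  refine ⟨fun hP => ?_, isPeps_of_hasZigzag hc hm⟩
  rcases le_or_gt ε (1 / 2) with hε₂ | hε₂
  · exact hP.hasZigzag hc hm hs hε hε₂
  · exact Or.inl (hasZigzag_of_half_lt hc hs hε₂)
end

section
/- Let f : [0,1] → [0,1] be a continuous surjection with exactly n ≥ 3 surjective intervals A_1, …, A_n ordered from left to right. Then A_1 ∩ A_n = ∅, and f([l, r]) = [0,1] for every l ∈ A_1 and r ∈ A_n; more generally, f([l, r]) = [0,1] for every l ∈ A_i and r ∈ A_j whenever j − i ≥ 2. -/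
/-!
By minimality and the intermediate value theorem, a surjective interval `[a, b]` takes one of the
values `0, 1` only at `a` and one of them only at `b`. If `[a, b]` and `[c, d]` are surjective
intervals with `a < c < b`, then `f a`, `f b`, `f c` would be three distinct values in `{0, 1}`.
Hence `A i` lies to the left of `A j` whenever `i < j`, and for `j ≥ i + 2` the interval `[l, r]`
contains `A (i + 1)`, so it maps onto `[0, 1]`.
-/

open Set Filter Topology

lemma eq_zero_or_one_and_notMem_of_mem_insert {p : ℝ} {T : Set ℝ}
    (h0 : (0 : ℝ) ∈ insert p T) (h1 : (1 : ℝ) ∈ insert p T) (hT : ¬ ((0 : ℝ) ∈ T ∧ (1 : ℝ) ∈ T)) :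
    (p = 0 ∨ p = 1) ∧ p ∉ T := by
  rcases h0 with rfl | h0
  · exact ⟨Or.inl rfl, fun h => hT ⟨h, h1.resolve_left one_ne_zero⟩⟩
  rcases h1 with rfl | h1
  · exact ⟨Or.inr rfl, fun h => hT ⟨h0, h⟩⟩
  · exact absurd ⟨h0, h1⟩ hT

lemma image_eq_unitInterval_of_subset {f : ℝ → ℝ} (hfm : MapsTo f (Icc 0 1) (Icc 0 1))
    {s : Set ℝ} (hs : s ⊆ Icc 0 1) (h : Icc 0 1 ⊆ f '' s) : f '' s = Icc 0 1 :=
  (hfm.mono_left hs).image_subset.antisymm h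

namespace SurjInterval

variable {f : ℝ → ℝ} {A : Set ℝ} {a b : ℝ}

lemma subset_unitInterval (h : SurjInterval f A) : A ⊆ Icc 0 1 := by
  obtain ⟨_, _, _, -, hsub, -⟩ := h
  exact hsub

lemma image_eq (h : SurjInterval f A) : f '' A = Icc 0 1 := by
  obtain ⟨_, _, _, -, -, himg, -⟩ := h
  exact himg

lemma image_ne_of_ssubset (h : SurjInterval f A) {c d : ℝ} (hcd : Icc c d ⊂ A) :
    f '' Icc c d ≠ Icc 0 1 := by
  obtain ⟨_, _, _, -, -, -, hmin⟩ := h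
  exact hmin c d hcd

lemma lt (h : SurjInterval f (Icc a b)) : a < b := by
  by_contra! hba
  have hsing := (subsingleton_Icc_of_ge hba).image f
  rw [h.image_eq] at hsing
  exact zero_ne_one (hsing ⟨le_rfl, zero_le_one⟩ ⟨zero_le_one, le_rfl⟩)

lemma superset_image_eq (hfm : MapsTo f (Icc 0 1) (Icc 0 1)) (h : SurjInterval f A)
    {s : Set ℝ} (hAs : A ⊆ s) (hs : s ⊆ Icc 0 1) : f '' s = Icc 0 1 :=
  image_eq_unitInterval_of_subset hfm hs (h.image_eq ▸ image_mono hAs)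

lemma not_zero_and_one_mem_image_of_ssubset (hfc : ContinuousOn f (Icc 0 1))
    (hfm : MapsTo f (Icc 0 1) (Icc 0 1)) (h : SurjInterval f A) {c d : ℝ} (hcd : Icc c d ⊂ A) :
    ¬ ((0 : ℝ) ∈ f '' Icc c d ∧ (1 : ℝ) ∈ f '' Icc c d) := by
  rintro ⟨h0, h1⟩
  have hsub : Icc c d ⊆ Icc 0 1 := hcd.subset.trans h.subset_unitInterval
  have hconn := isPreconnected_Icc.image f (hfc.mono hsub)
  exact h.image_ne_of_ssubset hcd
    (image_eq_unitInterval_of_subset hfm hsub (hconn.Icc_subset h0 h1))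

lemma left_endpoint (hfc : ContinuousOn f (Icc 0 1)) (hfm : MapsTo f (Icc 0 1) (Icc 0 1))
    (h : SurjInterval f (Icc a b)) : (f a = 0 ∨ f a = 1) ∧ f a ∉ f '' Ioc a b := by
  have himg : insert (f a) (f '' Ioc a b) = Icc 0 1 := by
    rw [← image_insert_eq, Ioc_insert_left h.lt.le, h.image_eq]
  refine eq_zero_or_one_and_notMem_of_mem_insert (himg ▸ ⟨le_rfl, zero_le_one⟩)
    (himg ▸ ⟨zero_le_one, le_rfl⟩) ?_
  rintro ⟨⟨x, hx, hx0⟩, ⟨y, hy, hy1⟩⟩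
  refine h.not_zero_and_one_mem_image_of_ssubset hfc hfm
    (Icc_ssubset_Icc_left h.lt.le (lt_min hx.1 hy.1) le_rfl) ⟨?_, ?_⟩
  · exact ⟨x, ⟨min_le_left x y, hx.2⟩, hx0⟩
  · exact ⟨y, ⟨min_le_right x y, hy.2⟩, hy1⟩

lemma right_endpoint (hfc : ContinuousOn f (Icc 0 1)) (hfm : MapsTo f (Icc 0 1) (Icc 0 1))
    (h : SurjInterval f (Icc a b)) : (f b = 0 ∨ f b = 1) ∧ f b ∉ f '' Ico a b := by
  have himg : insert (f b) (f '' Ico a b) = Icc 0 1 := by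
    rw [← image_insert_eq, Ico_insert_right h.lt.le, h.image_eq]
  refine eq_zero_or_one_and_notMem_of_mem_insert (himg ▸ ⟨le_rfl, zero_le_one⟩)
    (himg ▸ ⟨zero_le_one, le_rfl⟩) ?_
  rintro ⟨⟨x, hx, hx0⟩, ⟨y, hy, hy1⟩⟩
  refine h.not_zero_and_one_mem_image_of_ssubset hfc hfm
    (Icc_ssubset_Icc_right h.lt.le le_rfl (max_lt hx.2 hy.2)) ⟨?_, ?_⟩
  · exact ⟨x, ⟨hx.1, le_max_left x y⟩, hx0⟩
  · exact ⟨y, ⟨hy.1, le_max_right x y⟩, hy1⟩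

lemma right_le_of_left_lt (hfc : ContinuousOn f (Icc 0 1)) (hfm : MapsTo f (Icc 0 1) (Icc 0 1))
    {c d : ℝ} (hab : SurjInterval f (Icc a b)) (hcd : SurjInterval f (Icc c d))
    (hac : a < c) : b ≤ c := by
  by_contra! hcb
  obtain ⟨ha01, ha_ne⟩ := hab.left_endpoint hfc hfm
  obtain ⟨hb01, hb_ne⟩ := hab.right_endpoint hfc hfm
  obtain ⟨hc01, -⟩ := hcd.left_endpoint hfc hfm
  have hba : f b ≠ f a := fun h => ha_ne ⟨b, ⟨hab.lt, le_rfl⟩, h⟩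
  have hca : f c ≠ f a := fun h => ha_ne ⟨c, ⟨hac, hcb.le⟩, h⟩
  have hcb' : f c ≠ f b := fun h => hb_ne ⟨c, ⟨hac.le, hcb⟩, h⟩
  grind

end SurjInterval

lemma surjInterval_right_le_left_of_lt {f : ℝ → ℝ} (hfc : ContinuousOn f (Icc 0 1))
    (hfm : MapsTo f (Icc 0 1) (Icc 0 1)) {n : ℕ} {al ar : Fin n → ℝ} (hord : StrictMono al)
    (hA : ∀ i, SurjInterval f (Icc (al i) (ar i))) {i j : Fin n} (hij : i < j) : ar i ≤ al j :=
  (hA i).right_le_of_left_lt hfc hfm (hA j) (hord hij)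

lemma image_Icc_eq_unitInterval_of_add_two_le {f : ℝ → ℝ} (hfc : ContinuousOn f (Icc 0 1))
    (hfm : MapsTo f (Icc 0 1) (Icc 0 1)) {n : ℕ} {al ar : Fin n → ℝ} (hord : StrictMono al)
    (hA : ∀ i, SurjInterval f (Icc (al i) (ar i))) {i j : Fin n} (hij : (i : ℕ) + 2 ≤ j)
    {l r : ℝ} (hl : l ∈ Icc (al i) (ar i)) (hr : r ∈ Icc (al j) (ar j)) :
    f '' Icc l r = Icc 0 1 := by
  let k : Fin n := ⟨i + 1, by omega⟩
  have hlk : l ≤ al k :=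
    hl.2.trans (surjInterval_right_le_left_of_lt hfc hfm hord hA (Fin.lt_def.2 (by simp [k])))
  have hkr : ar k ≤ r :=
    (surjInterval_right_le_left_of_lt hfc hfm hord hA (Fin.lt_def.2 (by simp [k]; omega))).trans
      hr.1
  exact (hA k).superset_image_eq hfm (Icc_subset_Icc hlk hkr)
    (Icc_subset_Icc ((hA i).subset_unitInterval hl).1 ((hA j).subset_unitInterval hr).2)

/-- Let `f : [0,1] → [0,1]` be a continuous surjection with exactly `n ≥ 3`
surjective intervals `A i = [al i, ar i]`, ordered from left to right.  Then `A 0 ∩ A (n-1) = ∅`,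
`f([l,r]) = [0,1]` for every `l ∈ A 0` and `r ∈ A (n-1)`, and more generally
`f([l,r]) = [0,1]` whenever `l ∈ A i`, `r ∈ A j` and `j - i ≥ 2`. -/
theorem image_of_hull_of_separated_surjective_intervals
    (f : ℝ → ℝ)
    (hfc : ContinuousOn f (Set.Icc 0 1)) (hfm : Set.MapsTo f (Set.Icc 0 1) (Set.Icc 0 1))
    (n : ℕ) (hn : 3 ≤ n) (al ar : Fin n → ℝ)
    (hord : StrictMono al)
    (hA : ∀ i, SurjInterval f (Set.Icc (al i) (ar i))) :
    (Set.Icc (al ⟨0, by omega⟩) (ar ⟨0, by omega⟩) ∩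
        Set.Icc (al ⟨n - 1, by omega⟩) (ar ⟨n - 1, by omega⟩) = ∅) ∧
    (∀ l ∈ Set.Icc (al ⟨0, by omega⟩) (ar ⟨0, by omega⟩),
      ∀ r ∈ Set.Icc (al ⟨n - 1, by omega⟩) (ar ⟨n - 1, by omega⟩),
        f '' Set.Icc l r = Set.Icc (0 : ℝ) 1) ∧
    ∀ i j : Fin n, (i : ℕ) + 2 ≤ (j : ℕ) →
      ∀ l ∈ Set.Icc (al i) (ar i), ∀ r ∈ Set.Icc (al j) (ar j),
        f '' Set.Icc l r = Set.Icc (0 : ℝ) 1 := by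
  have hhull : ∀ i j : Fin n, (i : ℕ) + 2 ≤ (j : ℕ) →
      ∀ l ∈ Icc (al i) (ar i), ∀ r ∈ Icc (al j) (ar j), f '' Icc l r = Icc 0 1 :=
    fun _ _ hij _ hl _ hr => image_Icc_eq_unitInterval_of_add_two_le hfc hfm hord hA hij hl hr
  refine ⟨?_, hhull _ _ (by simp only; omega), hhull⟩
  have hsep : ar ⟨0, by omega⟩ < al ⟨n - 1, by omega⟩ :=
    (surjInterval_right_le_left_of_lt hfc hfm hord hA (j := ⟨1, by omega⟩)
      (Fin.lt_def.2 zero_lt_one)).trans_lt (hord (Fin.lt_def.2 (by simp only; omega)))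
  exact eq_empty_of_forall_notMem fun x hx => (hx.1.2.trans_lt hsep).not_ge hx.2.1
end
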